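/- arXiv:2203.04236 — 8 statements merged into one kernel-verified Lean document; each statement's English description precedes it below -/
import Mathlib

section
/- Whitened matrix form of Lemma 3.3 (FQI error bound under a geometric decay assumption). Let A and Â be d×d real matrices and θ₀, θ̂₀ ∈ ℝᵈ. Suppose there are α > 0 and β ∈ (0,1) such that ‖Aᵏ‖ ≤ α·βᵏ for every natural number k. Set ε_op := ‖Â − A‖ and ε_r := ‖θ̂₀ − θ₀‖, and assume ε_op ≤ (1−β)/(2α). Then the series θ⋆ := ∑_{k=0}^∞ Aᵏθ₀ converges, and for every natural number T, ‖∑_{k=0}^T Âᵏθ̂₀ − θ⋆‖ ≤ (α/(1−β))·‖θ₀‖·β^{T+1} + (2α/(1−β))·( ε_r + ε_op·‖θ₀‖·α/(1−β) ). -/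
/-!
Write `ε = ‖Â - A‖` and `γ = β + αε ≤ (1 + β) / 2`. Telescoping
`Âᵏ - Aᵏ = ∑_{i<k} A^{k-1-i} (Â - A) Âⁱ` and strong induction on `k` show that the perturbed
powers still decay geometrically, `‖Âᵏ‖ ≤ α γᵏ`, with `‖Âᵏ - Aᵏ‖ ≤ α (γᵏ - βᵏ)`. The error then
splits as `∑_{k≤T} Âᵏ (θ̂₀ - θ₀) + ∑_{k≤T} (Âᵏ - Aᵏ) θ₀ - ∑_{k>T} Aᵏ θ₀`, and the three pieces are
bounded by the geometric series `α ‖θ̂₀ - θ₀‖ / (1 - γ)`, `α ‖θ₀‖ (1/(1 - γ) - 1/(1 - β))` and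
`α ‖θ₀‖ β^{T+1} / (1 - β)`. Nothing here is specific to matrices: the estimate holds for operators
on any Banach space, and `Matrix.toEuclideanCLM` is isometric for the L² operator norm.
-/

open scoped Matrix.Norms.L2Operator
open Matrix Finset

theorem pow_sub_pow_eq_sum_pow_mul_sub_mul_pow {R : Type*} [Ring R] (a b : R) (n : ℕ) :
    b ^ n - a ^ n = ∑ i ∈ range n, a ^ (n - 1 - i) * (b - a) * b ^ i := by
  have htelescope := sum_range_sub (fun i ↦ a ^ (n - i) * b ^ i) n
  simp only [Nat.sub_self, Nat.sub_zero, pow_zero, mul_one, one_mul] at htelescope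
  rw [← htelescope]
  refine sum_congr rfl fun i hi ↦ ?_
  obtain ⟨m, rfl⟩ := Nat.exists_eq_add_of_lt (mem_range.mp hi)
  rw [show i + m + 1 - i = m + 1 by omega, show i + m + 1 - 1 - i = m by omega,
    show i + m + 1 - (i + 1) = m by omega, pow_succ', pow_succ]
  noncomm_ring

section GeometricDecay

variable {R : Type*} [SeminormedRing R] {a b : R} {α β : ℝ}

theorem norm_pow_sub_pow_le_of_forall_lt (ha : ∀ k, ‖a ^ k‖ ≤ α * β ^ k) {n : ℕ}
    (hb : ∀ i < n, ‖b ^ i‖ ≤ α * (β + α * ‖b - a‖) ^ i) :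
    ‖b ^ n - a ^ n‖ ≤ α * ((β + α * ‖b - a‖) ^ n - β ^ n) := by
  set γ := β + α * ‖b - a‖
  have hterm : ∀ i ∈ range n, ‖a ^ (n - 1 - i) * (b - a) * b ^ i‖
      ≤ α * β ^ (n - 1 - i) * ‖b - a‖ * (α * γ ^ i) := fun i hi ↦ by
    have ha' := ha (n - 1 - i)
    have hb' := hb i (mem_range.mp hi)
    calc ‖a ^ (n - 1 - i) * (b - a) * b ^ i‖
        ≤ ‖a ^ (n - 1 - i)‖ * ‖b - a‖ * ‖b ^ i‖ := norm_mul₃_le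
      _ ≤ _ := by
          gcongr
          exact mul_nonneg ((norm_nonneg _).trans ha') (norm_nonneg _)
  calc ‖b ^ n - a ^ n‖
      ≤ ∑ i ∈ range n, α * β ^ (n - 1 - i) * ‖b - a‖ * (α * γ ^ i) := by
        rw [pow_sub_pow_eq_sum_pow_mul_sub_mul_pow]
        exact norm_sum_le_of_le _ hterm
    _ = α * ((∑ i ∈ range n, γ ^ i * β ^ (n - 1 - i)) * (γ - β)) := by
        rw [sum_mul, mul_sum]
        refine sum_congr rfl fun i _ ↦ ?_
        ring
    _ = α * (γ ^ n - β ^ n) := by rw [geom_sum₂_mul]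

theorem norm_pow_le_of_geometric_decay (ha : ∀ k, ‖a ^ k‖ ≤ α * β ^ k) (n : ℕ) :
    ‖b ^ n‖ ≤ α * (β + α * ‖b - a‖) ^ n := by
  induction n using Nat.strong_induction_on with
  | _ n ih =>
    calc ‖b ^ n‖ = ‖a ^ n + (b ^ n - a ^ n)‖ := by rw [add_sub_cancel]
      _ ≤ α * β ^ n + α * ((β + α * ‖b - a‖) ^ n - β ^ n) :=
          (norm_add_le _ _).trans
            (add_le_add (ha n) (norm_pow_sub_pow_le_of_forall_lt ha ih))
      _ = α * (β + α * ‖b - a‖) ^ n := by ring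

theorem norm_pow_sub_pow_le_of_geometric_decay (ha : ∀ k, ‖a ^ k‖ ≤ α * β ^ k) (n : ℕ) :
    ‖b ^ n - a ^ n‖ ≤ α * ((β + α * ‖b - a‖) ^ n - β ^ n) :=
  norm_pow_sub_pow_le_of_forall_lt ha fun i _ ↦ norm_pow_le_of_geometric_decay ha i

end GeometricDecay

theorem norm_sum_le_of_norm_le_of_hasSum {ι E : Type*} [SeminormedAddCommGroup E] {f : ι → E}
    {c : ι → ℝ} {s : ℝ} (hfc : ∀ i, ‖f i‖ ≤ c i) (hc : HasSum c s) (t : Finset ι) :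
    ‖∑ i ∈ t, f i‖ ≤ s :=
  (norm_sum_le_of_le t fun i _ ↦ hfc i).trans <|
    sum_le_hasSum t (fun i _ ↦ (norm_nonneg _).trans (hfc i)) hc

section NeumannSeries

variable {𝕜 E : Type*} [NontriviallyNormedField 𝕜] [NormedAddCommGroup E] [NormedSpace 𝕜 E]
  {a b : E →L[𝕜] E} {α β : ℝ}

theorem norm_pow_apply_le_geometric (ha : ∀ k, ‖a ^ k‖ ≤ α * β ^ k) (θ : E) (k : ℕ) :
    ‖(a ^ k) θ‖ ≤ α * ‖θ‖ * β ^ k :=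
  calc ‖(a ^ k) θ‖ ≤ ‖a ^ k‖ * ‖θ‖ := (a ^ k).le_opNorm θ
    _ ≤ α * β ^ k * ‖θ‖ := by gcongr; exact ha k
    _ = α * ‖θ‖ * β ^ k := by ring

theorem summable_pow_apply_of_geometric_decay [CompleteSpace E]
    (ha : ∀ k, ‖a ^ k‖ ≤ α * β ^ k) (hβ0 : 0 ≤ β) (hβ1 : β < 1) (θ : E) :
    Summable fun k ↦ (a ^ k) θ :=
  .of_norm_bounded ((summable_geometric_of_lt_one hβ0 hβ1).mul_left _)
    (norm_pow_apply_le_geometric ha θ)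

theorem norm_tsum_pow_apply_add_le (ha : ∀ k, ‖a ^ k‖ ≤ α * β ^ k) (hβ0 : 0 ≤ β)
    (hβ1 : β < 1) (θ : E) (n : ℕ) :
    ‖∑' k, (a ^ (k + n)) θ‖ ≤ α * ‖θ‖ * β ^ n * (1 - β)⁻¹ :=
  tsum_of_norm_bounded ((hasSum_geometric_of_lt_one hβ0 hβ1).mul_left _) fun k ↦ by
    simpa only [pow_add, mul_assoc, mul_comm (β ^ k)] using
      norm_pow_apply_le_geometric ha θ (k + n)

theorem norm_sum_pow_apply_sub_tsum_le [CompleteSpace E] (hα : 0 < α) (hβ0 : 0 ≤ β)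
    (hβ1 : β < 1) (ha : ∀ k, ‖a ^ k‖ ≤ α * β ^ k) (hab : ‖b - a‖ ≤ (1 - β) / (2 * α))
    (θ θ' : E) (n : ℕ) :
    ‖∑ k ∈ range n, (b ^ k) θ' - ∑' k, (a ^ k) θ‖ ≤
      α / (1 - β) * ‖θ‖ * β ^ n +
        2 * α / (1 - β) * (‖θ' - θ‖ + ‖b - a‖ * ‖θ‖ * α / (1 - β)) := by
  set ε := ‖b - a‖
  set γ := β + α * ε
  have hαε : α * ε ≤ (1 - β) / 2 := by
    have := (le_div_iff₀ (by positivity)).mp hab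
    linarith
  have hγ0 : 0 ≤ γ := by positivity
  have hγ1 : γ < 1 := by linarith
  have hinv : (1 - γ)⁻¹ ≤ 2 / (1 - β) := by
    rw [← one_div, div_le_div_iff₀ (by linarith) (by linarith)]
    linarith
  have hinv_sub : (1 - γ)⁻¹ - (1 - β)⁻¹ = α * ε * ((1 - γ)⁻¹ * (1 - β)⁻¹) := by
    rw [inv_sub_inv (by linarith) (by linarith), div_eq_mul_inv, mul_inv]
    ring
  have hsplit : ∑ k ∈ range n, (b ^ k) θ' - ∑' k, (a ^ k) θ =
      ∑ k ∈ range n, (b ^ k) (θ' - θ) + ∑ k ∈ range n, (b ^ k - a ^ k) θ -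
        ∑' k, (a ^ (k + n)) θ := by
    rw [← (summable_pow_apply_of_geometric_decay ha hβ0 hβ1 θ).sum_add_tsum_nat_add n]
    simp only [map_sub, _root_.sub_apply, sum_sub_distrib]
    abel
  have hθ : ‖∑ k ∈ range n, (b ^ k) (θ' - θ)‖ ≤ α * ‖θ' - θ‖ * (1 - γ)⁻¹ :=
    norm_sum_le_of_norm_le_of_hasSum
      (norm_pow_apply_le_geometric (norm_pow_le_of_geometric_decay ha) _)
      ((hasSum_geometric_of_lt_one hγ0 hγ1).mul_left _) _
  have hpert : ‖∑ k ∈ range n, (b ^ k - a ^ k) θ‖ ≤ α * ‖θ‖ * ((1 - γ)⁻¹ - (1 - β)⁻¹) := by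
    refine norm_sum_le_of_norm_le_of_hasSum (fun k ↦ ?_)
      (((hasSum_geometric_of_lt_one hγ0 hγ1).sub
        (hasSum_geometric_of_lt_one hβ0 hβ1)).mul_left _) _
    calc ‖(b ^ k - a ^ k) θ‖ ≤ ‖b ^ k - a ^ k‖ * ‖θ‖ := (b ^ k - a ^ k).le_opNorm θ
      _ ≤ α * (γ ^ k - β ^ k) * ‖θ‖ := by
          gcongr
          exact norm_pow_sub_pow_le_of_geometric_decay ha k
      _ = α * ‖θ‖ * (γ ^ k - β ^ k) := by ring
  have htail := norm_tsum_pow_apply_add_le ha hβ0 hβ1 θ n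
  rw [hsplit]
  calc _ ≤ α * ‖θ' - θ‖ * (1 - γ)⁻¹ + α * ‖θ‖ * (α * ε * ((1 - γ)⁻¹ * (1 - β)⁻¹)) +
        α * ‖θ‖ * β ^ n * (1 - β)⁻¹ := by
        rw [← hinv_sub]
        exact (norm_sub_le _ _).trans
          (add_le_add ((norm_add_le _ _).trans (add_le_add hθ hpert)) htail)
    _ ≤ α * ‖θ' - θ‖ * (2 / (1 - β)) + α * ‖θ‖ * (α * ε * (2 / (1 - β) * (1 - β)⁻¹)) +
        α * ‖θ‖ * β ^ n * (1 - β)⁻¹ := by gcongr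
    _ = _ := by ring

end NeumannSeries

/-- Whitened matrix form of Lemma 3.3: FQI error bound under a geometric decay
assumption `‖Aᵏ‖ ≤ α·βᵏ` on the powers of the whitened cross-covariance `A`. -/
theorem stmt_1 (d : ℕ) (A Ahat : Matrix (Fin d) (Fin d) ℝ)
    (θ0 θ0hat : EuclideanSpace ℝ (Fin d)) (α β : ℝ)
    (hα : 0 < α) (hβ0 : 0 < β) (hβ1 : β < 1)
    (hdecay : ∀ k : ℕ, ‖A ^ k‖ ≤ α * β ^ k)
    (hop : ‖Ahat - A‖ ≤ (1 - β) / (2 * α)) :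
    Summable (fun k : ℕ => Matrix.toEuclideanLin (A ^ k) θ0) ∧
    ∀ T : ℕ,
      ‖(∑ k ∈ Finset.range (T + 1), Matrix.toEuclideanLin (Ahat ^ k) θ0hat) -
          ∑' k : ℕ, Matrix.toEuclideanLin (A ^ k) θ0‖ ≤
        (α / (1 - β)) * ‖θ0‖ * β ^ (T + 1) +
          (2 * α / (1 - β)) * (‖θ0hat - θ0‖ + ‖Ahat - A‖ * ‖θ0‖ * α / (1 - β)) := by
  have hlin : ∀ (M : Matrix (Fin d) (Fin d) ℝ) (k : ℕ) (x : EuclideanSpace ℝ (Fin d)),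
      toEuclideanLin (M ^ k) x = (toEuclideanCLM (𝕜 := ℝ) (n := Fin d) M ^ k) x :=
    fun M k x ↦ by rw [← map_pow]; rfl
  simp only [cstar_norm_def, map_pow, map_sub] at hdecay hop ⊢
  simp only [hlin]
  exact ⟨summable_pow_apply_of_geometric_decay hdecay hβ0.le hβ1 θ0,
    fun T ↦ norm_sum_pow_apply_sub_tsum_le hα hβ0.le hβ1 hdecay hop θ0 θ0hat (T + 1)⟩
end

section
/- Corollary 3.4 (low distribution shift implies stability). Let (Ω, ℙ) be a probability space and let x, y : Ω → ℝᵈ be measurable maps such that the matrix-valued functions ω ↦ x(ω)x(ω)ᵀ, ω ↦ x(ω)y(ω)ᵀ and ω ↦ y(ω)y(ω)ᵀ are Bochner integrable. Define Σ_cov := 𝔼[x xᵀ], Σ_cr := 𝔼[x yᵀ] and Σ_next := 𝔼[y yᵀ], and assume Σ_cov is positive definite. Let C ≥ 0 satisfy Σ_next ⪯ C·Σ_cov, and let γ ∈ (0,1). Then for every natural number j, ‖(γ·Σ_cov^{−1/2}·Σ_cr·Σ_cov^{−1/2})ʲ‖ ≤ (γ·√C)ʲ. -/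
open scoped Matrix.Norms.L2Operator
open Matrix MeasureTheory

/-- The square root of a positive semidefinite matrix, as defined in the older Mathlib
(`Matrix.PosSemidef.sqrt`, since removed). -/
noncomputable def Matrix.PosSemidef.sqrt {n 𝕜 : Type*} [Fintype n] [DecidableEq n] [RCLike 𝕜]
    [PartialOrder 𝕜]
    {A : Matrix n n 𝕜} (hA : A.PosSemidef) : Matrix n n 𝕜 :=
  (hA.1.eigenvectorUnitary : Matrix n n 𝕜) *
    diagonal (fun i => ((√(hA.1.eigenvalues i) : ℝ) : 𝕜)) *
    (star hA.1.eigenvectorUnitary : Matrix n n 𝕜)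

/-! The block matrix of second moments of `(x, y)` is the expectation of `(x, y) (x, y)ᵀ`, hence
positive semidefinite, and its Schur complement gives `Σ_crᵀ Σ_cov⁻¹ Σ_cr ⪯ Σ_next ⪯ C Σ_cov`.
Conjugating by `Σ_cov^{-1/2}` turns this into `Mᵀ M ⪯ C • 1` for
`M = Σ_cov^{-1/2} Σ_cr Σ_cov^{-1/2}`, so `‖M‖ ≤ √C`, and submultiplicativity of the operator norm
bounds the powers of `γ • M`. -/

theorem EuclideanSpace.real_norm_sq_eq_dotProduct {ι : Type*} [Fintype ι]
    (x : EuclideanSpace ℝ ι) : ‖x‖ ^ 2 = WithLp.ofLp x ⬝ᵥ WithLp.ofLp x := by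
  rw [← real_inner_self_eq_norm_sq, EuclideanSpace.inner_eq_star_dotProduct, star_trivial]

namespace Matrix

theorem dotProduct_vecMulVec_mulVec {α m n : Type*} [CommSemiring α] [Fintype m] [Fintype n]
    (u a : m → α) (b w : n → α) : u ⬝ᵥ vecMulVec a b *ᵥ w = (u ⬝ᵥ a) * (b ⬝ᵥ w) := by
  rw [vecMulVec_mulVec, op_smul_eq_smul, dotProduct_smul, smul_eq_mul, mul_comm]

section Integral

variable {Ω m n : Type*} [MeasurableSpace Ω] {μ : Measure Ω} [Fintype m] [Fintype n]
  [DecidableEq n]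

noncomputable def dotProductMulVecCLM (u : m → ℝ) (w : n → ℝ) : Matrix m n ℝ →L[ℝ] ℝ :=
  LinearMap.toContinuousLinearMap
    { toFun := fun M => u ⬝ᵥ M *ᵥ w
      map_add' := fun A B => by simp only [add_mulVec, dotProduct_add]
      map_smul' := fun c A => by simp only [smul_mulVec, dotProduct_smul, RingHom.id_apply] }

theorem _root_.MeasureTheory.Integrable.dotProduct_mulVec {f : Ω → Matrix m n ℝ}
    (hf : Integrable f μ) (u : m → ℝ) (w : n → ℝ) :
    Integrable (fun ω => u ⬝ᵥ f ω *ᵥ w) μ :=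
  (dotProductMulVecCLM u w).integrable_comp hf

theorem dotProduct_integral_mulVec {f : Ω → Matrix m n ℝ} (hf : Integrable f μ)
    (u : m → ℝ) (w : n → ℝ) :
    u ⬝ᵥ (∫ ω, f ω ∂μ) *ᵥ w = ∫ ω, u ⬝ᵥ f ω *ᵥ w ∂μ :=
  ((dotProductMulVecCLM u w).integral_comp_comm hf).symm

theorem transpose_integral [DecidableEq m] (f : Ω → Matrix m n ℝ) :
    (∫ ω, f ω ∂μ)ᵀ = ∫ ω, (f ω)ᵀ ∂μ :=
  ((transposeLinearEquiv m n ℝ ℝ).toContinuousLinearEquiv.integral_comp_comm f).symm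

end Integral

section CrossMoment

variable {Ω m n : Type*} [MeasurableSpace Ω] {μ : Measure Ω} [Fintype m] [Fintype n]
  [DecidableEq n]

noncomputable def crossMoment (μ : Measure Ω) (x : Ω → m → ℝ) (y : Ω → n → ℝ) : Matrix m n ℝ :=
  ∫ ω, vecMulVec (x ω) (y ω) ∂μ

variable {x : Ω → m → ℝ} {y : Ω → n → ℝ}

theorem integrable_dotProduct_mul_dotProduct
    (hxy : Integrable (fun ω => vecMulVec (x ω) (y ω)) μ) (u : m → ℝ) (w : n → ℝ) :
    Integrable (fun ω => (u ⬝ᵥ x ω) * (y ω ⬝ᵥ w)) μ := by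
  simpa only [dotProduct_vecMulVec_mulVec] using hxy.dotProduct_mulVec u w

theorem dotProduct_crossMoment_mulVec
    (hxy : Integrable (fun ω => vecMulVec (x ω) (y ω)) μ) (u : m → ℝ) (w : n → ℝ) :
    u ⬝ᵥ crossMoment μ x y *ᵥ w = ∫ ω, (u ⬝ᵥ x ω) * (y ω ⬝ᵥ w) ∂μ := by
  simp only [crossMoment, dotProduct_integral_mulVec hxy, dotProduct_vecMulVec_mulVec]

theorem isHermitian_crossMoment_self (x : Ω → n → ℝ) : (crossMoment μ x x).IsHermitian := by
  rw [IsHermitian, conjTranspose_eq_transpose_of_trivial, crossMoment, transpose_integral]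
  simp only [transpose_vecMulVec]

theorem posSemidef_fromBlocks_crossMoment {x y : Ω → n → ℝ}
    (hxx : Integrable (fun ω => vecMulVec (x ω) (x ω)) μ)
    (hxy : Integrable (fun ω => vecMulVec (x ω) (y ω)) μ)
    (hyy : Integrable (fun ω => vecMulVec (y ω) (y ω)) μ) :
    (fromBlocks (crossMoment μ x x) (crossMoment μ x y) (crossMoment μ x y)ᴴ
      (crossMoment μ y y)).PosSemidef := by
  set Sxx := crossMoment μ x x
  set Sxy := crossMoment μ x y
  set Syy := crossMoment μ y y
  refine .of_dotProduct_mulVec_nonneg (IsHermitian.fromBlocks (isHermitian_crossMoment_self x)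
    rfl (isHermitian_crossMoment_self y)) fun v => ?_
  obtain ⟨u, w, rfl⟩ : ∃ u w, v = Sum.elim u w := ⟨_, _, (Sum.elim_comp_inl_inr v).symm⟩
  have hcross : w ⬝ᵥ Sxyᴴ *ᵥ u = u ⬝ᵥ Sxy *ᵥ w := by
    rw [conjTranspose_eq_transpose_of_trivial, dotProduct_comm, ← vecMul_transpose,
      transpose_transpose, ← dotProduct_mulVec]
  have hsq : ∀ ω, (u ⬝ᵥ x ω + w ⬝ᵥ y ω) ^ 2 = (u ⬝ᵥ x ω) * (x ω ⬝ᵥ u) +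
      (u ⬝ᵥ x ω) * (y ω ⬝ᵥ w) + ((u ⬝ᵥ x ω) * (y ω ⬝ᵥ w) + (w ⬝ᵥ y ω) * (y ω ⬝ᵥ w)) :=
    fun ω => by rw [dotProduct_comm (x ω), dotProduct_comm (y ω)]; ring
  have hexpand : star (Sum.elim u w) ⬝ᵥ fromBlocks Sxx Sxy Sxyᴴ Syy *ᵥ Sum.elim u w =
      ∫ ω, (u ⬝ᵥ x ω + w ⬝ᵥ y ω) ^ 2 ∂μ := by
    have hxx' := integrable_dotProduct_mul_dotProduct hxx u u
    have hxy' := integrable_dotProduct_mul_dotProduct hxy u w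
    have hyy' := integrable_dotProduct_mul_dotProduct hyy w w
    rw [star_trivial, fromBlocks_mulVec, dotProduct_block]
    simp only [Sum.elim_comp_inl, Sum.elim_comp_inr, dotProduct_add, hcross]
    rw [dotProduct_crossMoment_mulVec hxx, dotProduct_crossMoment_mulVec hxy,
      dotProduct_crossMoment_mulVec hyy, ← integral_add hxx' hxy', ← integral_add hxy' hyy']
    simp only [hsq]
    exact (integral_add (hxx'.add hxy') (hxy'.add hyy')).symm
  rw [hexpand]
  exact integral_nonneg fun ω => sq_nonneg _

theorem posSemidef_crossMoment_sub_schur {x y : Ω → n → ℝ}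
    (hxx : Integrable (fun ω => vecMulVec (x ω) (x ω)) μ)
    (hxy : Integrable (fun ω => vecMulVec (x ω) (y ω)) μ)
    (hyy : Integrable (fun ω => vecMulVec (y ω) (y ω)) μ) (hpos : (crossMoment μ x x).PosDef) :
    (crossMoment μ y y -
      (crossMoment μ x y)ᴴ * (crossMoment μ x x)⁻¹ * crossMoment μ x y).PosSemidef :=
  have := hpos.isUnit.invertible
  (PosDef.fromBlocks₁₁ _ _ hpos).1 (posSemidef_fromBlocks_crossMoment hxx hxy hyy)

end CrossMoment

section Whitening

variable {m n : Type*} [Fintype m] [Fintype n] [DecidableEq n]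

theorem PosSemidef.isHermitian_sqrt {A : Matrix n n ℝ} (hA : A.PosSemidef) :
    hA.sqrt.IsHermitian := by
  simp [IsHermitian, PosSemidef.sqrt, Matrix.mul_assoc, star_eq_conjTranspose,
    conjTranspose_eq_transpose_of_trivial]

theorem PosSemidef.sqrt_mul_self {A : Matrix n n ℝ} (hA : A.PosSemidef) :
    hA.sqrt * hA.sqrt = A := by
  set U := (hA.1.eigenvectorUnitary : Matrix n n ℝ)
  set D := diagonal fun i => √(hA.1.eigenvalues i)
  have hU : star U * U = 1 := Unitary.coe_star_mul_self _
  have hD : D * D = diagonal hA.1.eigenvalues := by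
    simp only [D, diagonal_mul_diagonal, Real.mul_self_sqrt (hA.eigenvalues_nonneg _)]
  calc hA.sqrt * hA.sqrt = U * D * (star U * U) * D * star U := by
        simp only [PosSemidef.sqrt, U, D, RCLike.ofReal_real_eq_id, id, Matrix.mul_assoc]
    _ = U * diagonal hA.1.eigenvalues * star U := by
        rw [hU, Matrix.mul_one, Matrix.mul_assoc U D D, hD]
    _ = A := by
        conv_rhs => rw [hA.1.spectral_theorem]
        simp [Unitary.conjStarAlgAut_apply, U]

theorem l2_opNorm_le_sqrt_of_posSemidef {A : Matrix m n ℝ} {c : ℝ} (hc : 0 ≤ c)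
    (h : (c • 1 - Aᴴ * A).PosSemidef) : ‖A‖ ≤ √c := by
  rw [l2_opNorm_def]
  refine ContinuousLinearMap.opNorm_le_bound _ (Real.sqrt_nonneg c) fun v => ?_
  have hquad := h.dotProduct_mulVec_nonneg (WithLp.ofLp v)
  rw [star_trivial, sub_mulVec, dotProduct_sub, sub_nonneg, ← mulVec_mulVec, dotProduct_mulVec,
    conjTranspose_eq_transpose_of_trivial, vecMul_transpose, smul_mulVec, one_mulVec,
    dotProduct_smul, smul_eq_mul] at hquad
  refine (pow_le_pow_iff_left₀ (norm_nonneg _) (by positivity) two_ne_zero).1 ?_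
  rw [mul_pow, Real.sq_sqrt hc, EuclideanSpace.real_norm_sq_eq_dotProduct,
    EuclideanSpace.real_norm_sq_eq_dotProduct]
  exact hquad

theorem norm_sqrt_inv_mul_mul_sqrt_inv_le {A B : Matrix n n ℝ} (hA : A.PosDef) {c : ℝ}
    (hc : 0 ≤ c) (h : (c • A - Bᴴ * A⁻¹ * B).PosSemidef) :
    ‖hA.posSemidef.sqrt⁻¹ * B * hA.posSemidef.sqrt⁻¹‖ ≤ √c := by
  set S := hA.posSemidef.sqrt
  set T := S⁻¹
  have hSS : S * S = A := hA.posSemidef.sqrt_mul_self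
  have hS : IsUnit S.det :=
    isUnit_of_mul_isUnit_left (by rw [← det_mul, hSS]; exact hA.det_pos.ne'.isUnit)
  have hT : Tᴴ = T := by rw [conjTranspose_nonsing_inv, hA.posSemidef.isHermitian_sqrt.eq]
  have hTS : T * S = 1 := nonsing_inv_mul S hS
  have hST : S * T = 1 := mul_nonsing_inv S hS
  have hAinv : A⁻¹ = T * T := by rw [← hSS, Matrix.mul_inv_rev]
  have hwhiten : Tᴴ * (c • A - Bᴴ * A⁻¹ * B) * T = c • 1 - (T * B * T)ᴴ * (T * B * T) := by
    rw [Matrix.mul_sub, Matrix.sub_mul, conjTranspose_mul, conjTranspose_mul, hT, hAinv]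
    congr 1
    · rw [Matrix.mul_smul, Matrix.smul_mul, ← hSS, ← Matrix.mul_assoc, hTS, Matrix.one_mul, hST]
    · simp only [Matrix.mul_assoc]
  exact l2_opNorm_le_sqrt_of_posSemidef hc (hwhiten ▸ h.conjTranspose_mul_mul_same T)

theorem l2_opNorm_pow_le {𝕜 : Type*} [RCLike 𝕜] (A : Matrix n n 𝕜) : ∀ j : ℕ, ‖A ^ j‖ ≤ ‖A‖ ^ j
  | 0 => by
    rw [pow_zero, pow_zero, cstar_norm_def, map_one]
    exact ContinuousLinearMap.norm_id_le
  | j + 1 => norm_pow_le' A j.succ_pos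

end Whitening

end Matrix

theorem stmt_3_general {Ω : Type*} [MeasurableSpace Ω] (Pr : Measure Ω)
    (d : ℕ) (x y : Ω → Fin d → ℝ)
    (hxx : Integrable (fun ω => vecMulVec (x ω) (x ω)) Pr)
    (hxy : Integrable (fun ω => vecMulVec (x ω) (y ω)) Pr)
    (hyy : Integrable (fun ω => vecMulVec (y ω) (y ω)) Pr)
    (Scov Scr Snext : Matrix (Fin d) (Fin d) ℝ)
    (hScov : Scov = ∫ ω, vecMulVec (x ω) (x ω) ∂Pr)
    (hScr : Scr = ∫ ω, vecMulVec (x ω) (y ω) ∂Pr)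
    (hSnext : Snext = ∫ ω, vecMulVec (y ω) (y ω) ∂Pr)
    (hcov : Scov.PosDef)
    (C : ℝ) (hC : 0 ≤ C) (hshift : (C • Scov - Snext).PosSemidef)
    (γ : ℝ) (hγ0 : 0 < γ) :
    ∀ j : ℕ,
      ‖(γ • (hcov.posSemidef.sqrt⁻¹ * Scr * hcov.posSemidef.sqrt⁻¹)) ^ j‖ ≤
        (γ * Real.sqrt C) ^ j := by
  obtain rfl : Scov = crossMoment Pr x x := hScov
  obtain rfl : Scr = crossMoment Pr x y := hScr
  obtain rfl : Snext = crossMoment Pr y y := hSnext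
  have hschur := posSemidef_crossMoment_sub_schur hxx hxy hyy hcov
  have hM := norm_sqrt_inv_mul_mul_sqrt_inv_le hcov hC <| by
    simpa only [sub_add_sub_cancel] using hshift.add hschur
  intro j
  calc _ ≤ ‖γ • (hcov.posSemidef.sqrt⁻¹ * _ * hcov.posSemidef.sqrt⁻¹)‖ ^ j :=
        l2_opNorm_pow_le _ j
    _ ≤ (γ * √C) ^ j := by
        gcongr
        rw [norm_smul, Real.norm_of_nonneg hγ0.le]
        gcongr

/-- Corollary 3.4: low distribution shift implies stability.  Here `x` and `y`
are the current and next whitened state-action features, `Scov`, `Scr`,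
`Snext` are the covariance, cross-covariance and next-state covariance, and
`C` is the distribution-shift coefficient. -/
theorem stmt_3 {Ω : Type*} [MeasurableSpace Ω] (Pr : Measure Ω) [IsProbabilityMeasure Pr]
    (d : ℕ) (x y : Ω → Fin d → ℝ) (hx : Measurable x) (hy : Measurable y)
    (hxx : Integrable (fun ω => vecMulVec (x ω) (x ω)) Pr)
    (hxy : Integrable (fun ω => vecMulVec (x ω) (y ω)) Pr)
    (hyy : Integrable (fun ω => vecMulVec (y ω) (y ω)) Pr)
    (Scov Scr Snext : Matrix (Fin d) (Fin d) ℝ)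
    (hScov : Scov = ∫ ω, vecMulVec (x ω) (x ω) ∂Pr)
    (hScr : Scr = ∫ ω, vecMulVec (x ω) (y ω) ∂Pr)
    (hSnext : Snext = ∫ ω, vecMulVec (y ω) (y ω) ∂Pr)
    (hcov : Scov.PosDef)
    (C : ℝ) (hC : 0 ≤ C) (hshift : (C • Scov - Snext).PosSemidef)
    (γ : ℝ) (hγ0 : 0 < γ) (hγ1 : γ < 1) :
    ∀ j : ℕ,
      ‖(γ • (hcov.posSemidef.sqrt⁻¹ * Scr * hcov.posSemidef.sqrt⁻¹)) ^ j‖ ≤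
        (γ * Real.sqrt C) ^ j :=
  stmt_3_general Pr d x y hxx hxy hyy Scov Scr Snext hScov hScr hSnext hcov C hC hshift γ hγ0
end

section
/- Lemma A.3 (completeness makes the projected backup a nonexpansion in the sup norm). Let 𝒮 be a nonempty finite type, let Φ be a real matrix with rows (φ_i)_{i∈𝒮} in ℝᵈ, let μ : 𝒮 → ℝ be nonnegative with ∑_{i∈𝒮} μ_i = 1, and let P be a row-stochastic 𝒮×𝒮 real matrix (all entries nonnegative, each row summing to 1). Define Σ_cov := Φᵀ·diag(μ)·Φ and Σ_cr := Φᵀ·diag(μ)·P·Φ, and assume Σ_cov is positive definite. Assume that for every θ ∈ ℝᵈ there exists θ′ ∈ ℝᵈ with Φθ′ = PΦθ. Then for every θ ∈ ℝᵈ one has Φ·Σ_cov⁻¹·Σ_cr·θ = P·Φ·θ, and consequently max_{i∈𝒮} |(Φ·Σ_cov⁻¹·Σ_cr·θ)_i| ≤ max_{i∈𝒮} |(Φθ)_i|. -/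
open Matrix

/-!
Bellman completeness says that `P` maps the column space of `Φ` into itself, and the
`μ`-weighted least-squares projection `Φ (Φᵀ D Φ)⁻¹ Φᵀ D` fixes that column space, so the
projected backup `Φ Σ_cov⁻¹ Σ_cr θ` is exactly `P Φ θ`. A row-stochastic matrix averages the
entries of a vector, hence does not increase its sup norm.
-/

namespace Matrix

section Projection

variable {m n R : Type*} [Fintype m] [Fintype n] [DecidableEq n] [CommRing R]

noncomputable def weightedProjection (Φ : Matrix m n R) (D : Matrix m m R) : Matrix m m R :=
  Φ * (Φᵀ * D * Φ)⁻¹ * (Φᵀ * D)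

theorem weightedProjection_mul_self {Φ : Matrix m n R} {D : Matrix m m R}
    (h : IsUnit (Φᵀ * D * Φ).det) : weightedProjection Φ D * Φ = Φ := by
  rw [weightedProjection, Matrix.mul_assoc _ (Φᵀ * D), Matrix.mul_assoc, nonsing_inv_mul _ h,
    Matrix.mul_one]

end Projection

theorem iSup_abs_mulVec_le_of_mem_rowStochastic {n : Type*} [Fintype n] [DecidableEq n]
    {P : Matrix n n ℝ} (hP : P ∈ rowStochastic ℝ n) (v : n → ℝ) :
    ⨆ i, |(P *ᵥ v) i| ≤ ⨆ i, |v i| := by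
  have hbdd : BddAbove (Set.range fun j => |v j|) := (Set.finite_range _).bddAbove
  refine Real.iSup_le (fun i => ?_) (Real.iSup_nonneg fun _ => abs_nonneg _)
  calc |(P *ᵥ v) i| = |∑ j, P i j * v j| := rfl
    _ ≤ ∑ j, |P i j * v j| := Finset.abs_sum_le_sum_abs _ _
    _ = ∑ j, P i j * |v j| := by
        simp only [abs_mul, abs_of_nonneg (nonneg_of_mem_rowStochastic hP)]
    _ ≤ ∑ j, P i j * ⨆ k, |v k| :=
        Finset.sum_le_sum fun j _ =>
          mul_le_mul_of_nonneg_left (le_ciSup hbdd j) (nonneg_of_mem_rowStochastic hP)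
    _ = ⨆ k, |v k| := by rw [← Finset.sum_mul, sum_row_of_mem_rowStochastic hP, one_mul]

end Matrix

theorem stmt_6_general {S : Type*} [Fintype S] [DecidableEq S]
    (d : ℕ)
    (Φ : Matrix S (Fin d) ℝ) (μ : S → ℝ)
    (P : Matrix S S ℝ) (hP0 : ∀ i j, 0 ≤ P i j) (hP1 : ∀ i, ∑ j, P i j = 1)
    (Scov Scr : Matrix (Fin d) (Fin d) ℝ)
    (hScov : Scov = Φᵀ * Matrix.diagonal μ * Φ)
    (hScr : Scr = Φᵀ * Matrix.diagonal μ * P * Φ)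
    (hcov : Scov.PosDef)
    (hcomplete : ∀ θ : Fin d → ℝ, ∃ θ' : Fin d → ℝ, Φ *ᵥ θ' = P *ᵥ (Φ *ᵥ θ)) :
    ∀ θ : Fin d → ℝ,
      (Φ * Scov⁻¹ * Scr) *ᵥ θ = (P * Φ) *ᵥ θ ∧
      (⨆ i : S, |((Φ * Scov⁻¹ * Scr) *ᵥ θ) i|) ≤ ⨆ i : S, |(Φ *ᵥ θ) i| := by
  intro θ
  obtain ⟨θ', hθ'⟩ := hcomplete θ
  have hproj : weightedProjection Φ (diagonal μ) * Φ = Φ := by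
    subst hScov
    exact weightedProjection_mul_self hcov.det_pos.ne'.isUnit
  have hbackup : (Φ * Scov⁻¹ * Scr) *ᵥ θ = (P * Φ) *ᵥ θ := by
    calc (Φ * Scov⁻¹ * Scr) *ᵥ θ = weightedProjection Φ (diagonal μ) *ᵥ (P *ᵥ (Φ *ᵥ θ)) := by
          simp only [hScov, hScr, weightedProjection, mulVec_mulVec, Matrix.mul_assoc]
      _ = (P * Φ) *ᵥ θ := by rw [← hθ', mulVec_mulVec, hproj, hθ', mulVec_mulVec]
  refine ⟨hbackup, ?_⟩
  rw [hbackup, ← mulVec_mulVec]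
  exact iSup_abs_mulVec_le_of_mem_rowStochastic (mem_rowStochastic_iff_sum.2 ⟨hP0, hP1⟩) _

/-- Lemma A.3: under Bellman completeness the projected backup
`Φ·Σ_cov⁻¹·Σ_cr` coincides with `P·Φ` and is hence a nonexpansion in the sup
norm. -/
theorem stmt_6 {S : Type*} [Fintype S] [DecidableEq S] [Nonempty S]
    (d : ℕ)
    (Φ : Matrix S (Fin d) ℝ) (μ : S → ℝ)
    (hμ0 : ∀ i, 0 ≤ μ i) (hμ1 : ∑ i, μ i = 1)
    (P : Matrix S S ℝ) (hP0 : ∀ i j, 0 ≤ P i j) (hP1 : ∀ i, ∑ j, P i j = 1)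
    (Scov Scr : Matrix (Fin d) (Fin d) ℝ)
    (hScov : Scov = Φᵀ * Matrix.diagonal μ * Φ)
    (hScr : Scr = Φᵀ * Matrix.diagonal μ * P * Φ)
    (hcov : Scov.PosDef)
    (hcomplete : ∀ θ : Fin d → ℝ, ∃ θ' : Fin d → ℝ, Φ *ᵥ θ' = P *ᵥ (Φ *ᵥ θ)) :
    ∀ θ : Fin d → ℝ,
      (Φ * Scov⁻¹ * Scr) *ᵥ θ = (P * Φ) *ᵥ θ ∧
      (⨆ i : S, |((Φ * Scov⁻¹ * Scr) *ᵥ θ) i|) ≤ ⨆ i : S, |(Φ *ᵥ θ) i| :=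
  stmt_6_general d Φ μ P hP0 hP1 Scov Scr hScov hScr hcov hcomplete
end

section
/- Core of Proposition 3.5 (exponential variance blow-up of fitted Q-iteration without stability). Let (Ω, ℙ) be a probability space and let z : Ω → ℝᵈ be measurable with each coordinate z_i and each product z_i·z_j integrable, with 𝔼[z] = 0. Let Λ be the d×d covariance matrix with entries Λ_{ij} = 𝔼[z_i z_j], and suppose σ > 0 satisfies σ·I ⪯ Λ. Let A be a d×d real matrix whose complexification (the ℂ-linear map induced by A on ℂᵈ) has an eigenvalue λ ∈ ℂ with |λ| > 1. Then for every natural number T, 𝔼[ ‖(∑_{k=0}^T Aᵏ)·z‖² ] ≥ σ·|(λ^{T+1} − 1)/(λ − 1)|². -/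
/-!
A complex eigenvector `v` of `A` with eigenvalue `λ` is an eigenvector of `B = ∑_{k ≤ T} Aᵏ`
with eigenvalue `μ = (λ^{T+1} - 1)/(λ - 1)`, so Cauchy–Schwarz gives `|μ|² ≤ tr (B Bᵀ)`.
On the other hand `𝔼‖B z‖² = tr (B Λ Bᵀ)`, and `Λ ⪰ σ I` gives `tr (B Λ Bᵀ) ≥ σ tr (B Bᵀ)`.
-/

open scoped Matrix.Norms.L2Operator
open Matrix MeasureTheory Finset

namespace Matrix

variable {m n : Type*} [Fintype m] [Fintype n]

theorem pow_mulVec_eq_pow_smul [DecidableEq n] {R : Type*} [CommSemiring R] {M : Matrix n n R}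
    {v : n → R} {c : R} (h : M *ᵥ v = c • v) (k : ℕ) : (M ^ k) *ᵥ v = c ^ k • v := by
  induction k with
  | zero => simp
  | succ k ih => rw [pow_succ, ← mulVec_mulVec, h, mulVec_smul, ih, smul_smul, ← pow_succ']

theorem geom_sum_mulVec_eq_smul [DecidableEq n] {R : Type*} [CommSemiring R] {M : Matrix n n R}
    {v : n → R} {c : R} (h : M *ᵥ v = c • v) (N : ℕ) :
    (∑ k ∈ range N, M ^ k) *ᵥ v = (∑ k ∈ range N, c ^ k) • v := by
  simp only [sum_mulVec, pow_mulVec_eq_pow_smul h, sum_smul]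

theorem sum_norm_mulVec_sq_le {α : Type*} [SeminormedRing α] (M : Matrix m n α) (v : n → α) :
    ∑ i, ‖(M *ᵥ v) i‖ ^ 2 ≤ (∑ i, ∑ j, ‖M i j‖ ^ 2) * ∑ j, ‖v j‖ ^ 2 := by
  rw [sum_mul]
  refine sum_le_sum fun i _ => ?_
  calc ‖(M *ᵥ v) i‖ ^ 2 ≤ (∑ j, ‖M i j‖ * ‖v j‖) ^ 2 := by
        gcongr
        exact (norm_sum_le _ _).trans (sum_le_sum fun j _ => norm_mul_le _ _)
    _ ≤ (∑ j, ‖M i j‖ ^ 2) * ∑ j, ‖v j‖ ^ 2 := sum_mul_sq_le_sq_mul_sq _ _ _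

theorem trace_mul_transpose_self (B : Matrix m n ℝ) : trace (B * Bᵀ) = ∑ i, ∑ j, B i j ^ 2 := by
  simp [trace, mul_apply, sq]

theorem norm_sq_le_trace_mul_transpose_of_mulVec_eq_smul {B : Matrix n n ℝ} {v : n → ℂ} {μ : ℂ}
    (hv : v ≠ 0) (h : B.map Complex.ofReal *ᵥ v = μ • v) : ‖μ‖ ^ 2 ≤ trace (B * Bᵀ) := by
  have hv_pos : 0 < ∑ j, ‖v j‖ ^ 2 := by
    obtain ⟨j, hj⟩ := Function.ne_iff.mp hv
    exact sum_pos' (fun j _ => by positivity) ⟨j, mem_univ j, by positivity⟩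
  have key := sum_norm_mulVec_sq_le (B.map Complex.ofReal) v
  simp only [h, Pi.smul_apply, smul_eq_mul, norm_mul, mul_pow, ← mul_sum, map_apply,
    Complex.norm_real, Real.norm_eq_abs, sq_abs] at key
  rw [trace_mul_transpose_self]
  exact le_of_mul_le_mul_right key hv_pos

theorem PosSemidef.mul_trace_mul_transpose_le [DecidableEq n] {Λ : Matrix n n ℝ} {σ : ℝ}
    (h : (Λ - σ • 1).PosSemidef) (B : Matrix m n ℝ) :
    σ * trace (B * Bᵀ) ≤ trace (B * Λ * Bᵀ) := by
  have hexpand : B * (Λ - σ • 1) * Bᴴ = B * Λ * Bᵀ - σ • (B * Bᵀ) := by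
    rw [Matrix.mul_sub, Matrix.sub_mul, Matrix.mul_smul, Matrix.smul_mul, Matrix.mul_one,
      conjTranspose_eq_transpose_of_trivial]
  have := (h.mul_mul_conjTranspose_same B).trace_nonneg
  rw [hexpand, trace_sub, trace_smul, smul_eq_mul] at this
  linarith

end Matrix

theorem integral_norm_toLp_mulVec_sq {Ω : Type*} [MeasurableSpace Ω] (P : Measure Ω)
    {m n : Type*} [Fintype m] [Fintype n] (z : Ω → n → ℝ)
    (hz : ∀ i j, Integrable (fun ω => z ω i * z ω j) P) (B : Matrix m n ℝ) :
    ∫ ω, ‖WithLp.toLp 2 (B *ᵥ z ω)‖ ^ 2 ∂P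
      = trace (B * Matrix.of (fun i j => ∫ ω, z ω i * z ω j ∂P) * Bᵀ) := by
  have hexpand : ∀ ω, ‖WithLp.toLp 2 (B *ᵥ z ω)‖ ^ 2
      = ∑ i, ∑ j, ∑ k, B i j * B i k * (z ω j * z ω k) := fun ω => by
    rw [EuclideanSpace.real_norm_sq_eq]
    simp only [mulVec, dotProduct, sq, sum_mul_sum]
    refine sum_congr rfl fun i _ => sum_congr rfl fun j _ => sum_congr rfl fun k _ => by ring
  simp_rw [hexpand]
  rw [integral_finsetSum _ fun i _ => integrable_finsetSum _ fun j _ =>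
    integrable_finsetSum _ fun k _ => (hz j k).const_mul _]
  simp only [trace, Matrix.diag, mul_apply, of_apply, transpose_apply, sum_mul]
  refine sum_congr rfl fun i _ => ?_
  rw [integral_finsetSum _ fun j _ => integrable_finsetSum _ fun k _ => (hz j k).const_mul _,
    sum_comm]
  refine sum_congr rfl fun j _ => ?_
  rw [integral_finsetSum _ fun k _ => (hz j k).const_mul _]
  refine sum_congr rfl fun k _ => ?_
  rw [integral_const_mul]
  ring

theorem stmt_8_general {Ω : Type*} [MeasurableSpace Ω] (Pr : Measure Ω)
    (d : ℕ) (z : Ω → Fin d → ℝ)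
    (hint2 : ∀ i j, Integrable (fun ω => z ω i * z ω j) Pr)
    (Λ : Matrix (Fin d) (Fin d) ℝ) (hΛ : Λ = Matrix.of fun i j => ∫ ω, z ω i * z ω j ∂Pr)
    (σ : ℝ) (hσ : 0 < σ)
    (hΛlb : (Λ - σ • (1 : Matrix (Fin d) (Fin d) ℝ)).PosSemidef)
    (A : Matrix (Fin d) (Fin d) ℝ) (lam : ℂ) (hlam : 1 < ‖lam‖)
    (hev : ∃ v : Fin d → ℂ, v ≠ 0 ∧ A.map Complex.ofReal *ᵥ v = lam • v) :
    ∀ T : ℕ,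
      σ * ‖(lam ^ (T + 1) - 1) / (lam - 1)‖ ^ 2 ≤
        ∫ ω, ‖(WithLp.equiv 2 (Fin d → ℝ)).symm
          ((∑ k ∈ Finset.range (T + 1), A ^ k) *ᵥ z ω)‖ ^ 2 ∂Pr := by
  intro T
  obtain ⟨v, hv, hAv⟩ := hev
  have hlam1 : lam ≠ 1 := by
    rintro rfl
    simp at hlam
  set B := ∑ k ∈ range (T + 1), A ^ k
  have hBv : B.map Complex.ofReal *ᵥ v = ((lam ^ (T + 1) - 1) / (lam - 1)) • v := by
    rw [← geom_sum_eq hlam1, ← geom_sum_mulVec_eq_smul hAv]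
    change Complex.ofRealHom.mapMatrix B *ᵥ v = _
    simp only [B, map_sum, map_pow]
    rfl
  calc σ * ‖(lam ^ (T + 1) - 1) / (lam - 1)‖ ^ 2 ≤ σ * trace (B * Bᵀ) := by
        gcongr
        exact norm_sq_le_trace_mul_transpose_of_mulVec_eq_smul hv hBv
    _ ≤ trace (B * Λ * Bᵀ) := hΛlb.mul_trace_mul_transpose_le B
    _ = _ := by
        rw [hΛ]
        exact (integral_norm_toLp_mulVec_sq Pr z hint2 B).symm

/-- Core of Proposition 3.5: if the backup matrix `A` has a complex eigenvalue
`lam` of modulus greater than 1 and the noise `z` is centered with covariance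
`Λ ⪰ σ·I`, then the variance of the `T`-step FQI iterate grows like
`|(lam^{T+1} − 1)/(lam − 1)|²`. -/
theorem stmt_8 {Ω : Type*} [MeasurableSpace Ω] (Pr : Measure Ω) [IsProbabilityMeasure Pr]
    (d : ℕ) (z : Ω → Fin d → ℝ) (hz : Measurable z)
    (hint : ∀ i, Integrable (fun ω => z ω i) Pr)
    (hint2 : ∀ i j, Integrable (fun ω => z ω i * z ω j) Pr)
    (hmean : ∀ i, ∫ ω, z ω i ∂Pr = 0)
    (Λ : Matrix (Fin d) (Fin d) ℝ) (hΛ : Λ = Matrix.of fun i j => ∫ ω, z ω i * z ω j ∂Pr)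
    (σ : ℝ) (hσ : 0 < σ)
    (hΛlb : (Λ - σ • (1 : Matrix (Fin d) (Fin d) ℝ)).PosSemidef)
    (A : Matrix (Fin d) (Fin d) ℝ) (lam : ℂ) (hlam : 1 < ‖lam‖)
    (hev : ∃ v : Fin d → ℂ, v ≠ 0 ∧ A.map Complex.ofReal *ᵥ v = lam • v) :
    ∀ T : ℕ,
      σ * ‖(lam ^ (T + 1) - 1) / (lam - 1)‖ ^ 2 ≤
        ∫ ω, ‖(WithLp.equiv 2 (Fin d → ℝ)).symm
          ((∑ k ∈ Finset.range (T + 1), A ^ k) *ᵥ z ω)‖ ^ 2 ∂Pr :=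
  stmt_8_general Pr d z hint2 Λ hΛ σ hσ hΛlb A lam hlam hev
end

section
/- Proposition 4.2 (stability implies invertibility, with a quantitative bound). Let A be a d×d real matrix and let P be a symmetric positive semidefinite d×d real matrix solving the discrete Lyapunov equation P = AᵀPA + I. Then I − A is invertible and ‖(I − A)⁻¹‖ ≤ 2·cond(P)^{1/2}·‖P‖, where cond(P) := ‖P‖·‖P⁻¹‖ (P is invertible since P ⪰ I). -/
open scoped Matrix.Norms.L2Operator
open Matrix

/-! If `(I - A) x = y` then `A x = x - y`, and evaluating the Lyapunov equation `P = AᵀPA + I` at `x`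
leaves `‖x‖² = 2 xᵀPy - yᵀPy ≤ 2 ‖x‖ ‖P‖ ‖y‖`, because `P ⪰ 0`. Hence `‖x‖ ≤ 2 ‖P‖ ‖y‖`, so `I - A`
is injective and `‖(I - A)⁻¹‖ ≤ 2 ‖P‖`. Finally `P ⪰ I` is invertible, and
`‖P‖ = ‖P P⁻¹ P‖ ≤ ‖P‖² ‖P⁻¹‖` gives `cond(P) ≥ 1` whenever `P ≠ 0`. -/

namespace Matrix

section Lyapunov

variable {n R : Type*} [Fintype n] [DecidableEq n]

theorem dotProduct_self_eq_of_lyapunov [CommRing R] {A P : Matrix n n R} (hP : P.IsSymm)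
    (hlyap : P = Aᵀ * P * A + 1) {x y : n → R} (hxy : (1 - A) *ᵥ x = y) :
    x ⬝ᵥ x = 2 * (x ⬝ᵥ P *ᵥ y) - y ⬝ᵥ P *ᵥ y := by
  have hAx : A *ᵥ x = x - y := by
    rw [← hxy, sub_mulVec, one_mulVec, sub_sub_cancel]
  have hquad : x ⬝ᵥ P *ᵥ x = (x - y) ⬝ᵥ P *ᵥ (x - y) + x ⬝ᵥ x := by
    conv_lhs => rw [hlyap]
    rw [add_mulVec, one_mulVec, dotProduct_add, ← mulVec_mulVec, ← mulVec_mulVec,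
      dotProduct_mulVec x Aᵀ, vecMul_transpose, hAx]
  have hcross : y ⬝ᵥ P *ᵥ x = x ⬝ᵥ P *ᵥ y := by
    rw [dotProduct_mulVec, ← mulVec_transpose, hP.eq, dotProduct_comm]
  rw [mulVec_sub, sub_dotProduct, dotProduct_sub, dotProduct_sub, hcross] at hquad
  linear_combination -hquad

theorem isUnit_det_one_sub_of_lyapunov [Field R] [LinearOrder R] [IsStrictOrderedRing R]
    {A P : Matrix n n R} (hP : P.IsSymm) (hlyap : P = Aᵀ * P * A + 1) :
    IsUnit (1 - A).det := by
  rw [isUnit_iff_ne_zero, Ne, ← exists_mulVec_eq_zero_iff]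
  rintro ⟨x, hx, hker⟩
  have hsq := dotProduct_self_eq_of_lyapunov hP hlyap hker
  simp only [mulVec_zero, dotProduct_zero, mul_zero, sub_zero] at hsq
  exact hx (dotProduct_self_eq_zero.mp hsq)

theorem norm_le_two_mul_l2_opNorm_of_lyapunov {A P : Matrix n n ℝ} (hP : P.PosSemidef)
    (hlyap : P = Aᵀ * P * A + 1) {x y : EuclideanSpace ℝ n}
    (hxy : toEuclideanCLM (𝕜 := ℝ) (1 - A) x = y) :
    ‖x‖ ≤ 2 * ‖P‖ * ‖y‖ := by
  have hxy' : (1 - A) *ᵥ x.ofLp = y.ofLp := by rw [← hxy, ofLp_toEuclideanCLM]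
  have hsq : ‖x‖ * ‖x‖ ≤ ‖x‖ * (2 * ‖P‖ * ‖y‖) :=
    calc ‖x‖ * ‖x‖ = x.ofLp ⬝ᵥ 1 *ᵥ x.ofLp := by
          rw [← real_inner_self_eq_norm_mul_norm, ← inner_toEuclideanCLM, map_one,
            one_apply_eq_self]
      _ = 2 * (x.ofLp ⬝ᵥ P *ᵥ y.ofLp) - y.ofLp ⬝ᵥ P *ᵥ y.ofLp := by
          rw [one_mulVec]
          exact dotProduct_self_eq_of_lyapunov (isHermitian_iff_isSymm.mp hP.1) hlyap hxy'
      _ ≤ 2 * (x.ofLp ⬝ᵥ P *ᵥ y.ofLp) := by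
          have hPy := hP.dotProduct_mulVec_nonneg y.ofLp
          rw [star_trivial] at hPy
          linarith
      _ = 2 * inner ℝ x (toEuclideanCLM (𝕜 := ℝ) P y) := by rw [inner_toEuclideanCLM]
      _ ≤ 2 * (‖x‖ * (‖P‖ * ‖y‖)) := by
          gcongr
          exact (real_inner_le_norm _ _).trans
            (mul_le_mul_of_nonneg_left ((toEuclideanCLM (𝕜 := ℝ) P).le_opNorm y) (norm_nonneg x))
      _ = ‖x‖ * (2 * ‖P‖ * ‖y‖) := by ring
  rcases (norm_nonneg x).eq_or_lt with hx | hx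
  · rw [← hx]
    positivity
  · exact le_of_mul_le_mul_left hsq hx

theorem l2_opNorm_inv_one_sub_le_of_lyapunov {A P : Matrix n n ℝ} (hP : P.PosSemidef)
    (hlyap : P = Aᵀ * P * A + 1) :
    ‖(1 - A)⁻¹‖ ≤ 2 * ‖P‖ := by
  have hdet := isUnit_det_one_sub_of_lyapunov (isHermitian_iff_isSymm.mp hP.1) hlyap
  rw [cstar_norm_def]
  refine ContinuousLinearMap.opNorm_le_bound _ (by positivity) fun y ↦ ?_
  refine norm_le_two_mul_l2_opNorm_of_lyapunov hP hlyap ?_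
  rw [← mul_apply_eq_comp, ← map_mul, mul_nonsing_inv _ hdet, map_one, one_apply_eq_self]

end Lyapunov

end Matrix

theorem norm_le_sqrt_norm_mul_norm_mul_norm_of_mul_eq_one {R : Type*} [NormedRing R] {a b : R}
    (h : a * b = 1) : ‖a‖ ≤ √(‖a‖ * ‖b‖) * ‖a‖ := by
  rcases (norm_nonneg a).eq_or_lt with ha | ha
  · rw [← ha, mul_zero]
  have hsub : ‖a‖ ≤ ‖a‖ * ‖b‖ * ‖a‖ :=
    calc ‖a‖ = ‖a * b * a‖ := by rw [h, one_mul]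
      _ ≤ ‖a‖ * ‖b‖ * ‖a‖ := norm_mul₃_le
  have hcond : 1 ≤ ‖a‖ * ‖b‖ := le_of_mul_le_mul_right (by rwa [one_mul]) ha
  exact le_mul_of_one_le_left ha.le (Real.one_le_sqrt.mpr hcond)

/-- Proposition 4.2: stability implies invertibility.  If `P ⪰ 0` solves the
discrete Lyapunov equation `P = AᵀPA + I`, then `I − A` is invertible and
`‖(I − A)⁻¹‖ ≤ 2·cond(P)^{1/2}·‖P‖` where `cond(P) = ‖P‖·‖P⁻¹‖`. -/
theorem stmt_11 (d : ℕ) (A P : Matrix (Fin d) (Fin d) ℝ)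
    (hP : P.PosSemidef) (hlyap : P = Aᵀ * P * A + 1) :
    IsUnit (1 - A).det ∧
      ‖(1 - A)⁻¹‖ ≤ 2 * Real.sqrt (‖P‖ * ‖P⁻¹‖) * ‖P‖ := by
  have hPdef : P.PosDef := by
    have hAPA : (Aᵀ * P * A).PosSemidef := by simpa using hP.conjTranspose_mul_mul_same A
    exact hlyap ▸ PosDef.posSemidef_add hAPA PosDef.one
  refine ⟨isUnit_det_one_sub_of_lyapunov (isHermitian_iff_isSymm.mp hP.1) hlyap, ?_⟩
  have hinv : P * P⁻¹ = 1 := mul_nonsing_inv P ((isUnit_iff_isUnit_det P).mp hPdef.isUnit)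
  calc ‖(1 - A)⁻¹‖ ≤ 2 * ‖P‖ := l2_opNorm_inv_one_sub_le_of_lyapunov hP hlyap
    _ ≤ 2 * (√(‖P‖ * ‖P⁻¹‖) * ‖P‖) := by
        gcongr
        exact norm_le_sqrt_norm_mul_norm_mul_norm_of_mul_eq_one hinv
    _ = 2 * √(‖P‖ * ‖P⁻¹‖) * ‖P‖ := by ring
end

section
/- Lemma A.1, first part (Lyapunov stability margin: geometric decay of matrix powers). Let A be a d×d real matrix and let P be a symmetric positive semidefinite d×d real matrix solving the discrete Lyapunov equation P = AᵀPA + I (so P ⪰ I and P is invertible). Then for every natural number k, ‖Aᵏ‖² ≤ cond(P)·(1 − 1/‖P‖)ᵏ, where cond(P) := ‖P‖·‖P⁻¹‖. -/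
/-!
Write `V x = ⟪P x, x⟫`. The Lyapunov equation says `V (A x) = V x - ‖x‖²`, and
`‖x‖² ≤ V x ≤ ‖P‖ ‖x‖²`, so `V` contracts by the factor `1 - 1/‖P‖` at each step and
`V (Aᵏ x) ≤ (1 - 1/‖P‖)ᵏ ‖P‖ ‖x‖²`. In the other direction `‖y‖² ≤ ‖P⁻¹‖ V y`, by Cauchy–Schwarz
for the positive form `⟪P ·, ·⟫` at `y` and `P⁻¹ y`; taking `y = Aᵏ x` gives the bound on `‖Aᵏ‖`.
Nothing here is specific to matrices: the argument works for bounded operators on a real Hilbert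
space, to which matrices are transported by `Matrix.toEuclideanCLM`.
-/

open scoped Matrix.Norms.L2Operator InnerProductSpace ComplexOrder
open Matrix

namespace ContinuousLinearMap

section OpNorm

variable {𝕜 E F : Type*} [NontriviallyNormedField 𝕜] [SeminormedAddCommGroup E]
  [SeminormedAddCommGroup F] [NormedSpace 𝕜 E] [NormedSpace 𝕜 F]

lemma sq_opNorm_le_of_sq_norm_apply_le {f : E →L[𝕜] F} {C : ℝ} (hC : 0 ≤ C)
    (h : ∀ x, ‖f x‖ ^ 2 ≤ C * ‖x‖ ^ 2) : ‖f‖ ^ 2 ≤ C := by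
  suffices ‖f‖ ≤ √C by
    simpa [Real.sq_sqrt hC] using pow_le_pow_left₀ (norm_nonneg f) this 2
  refine opNorm_le_bound f (Real.sqrt_nonneg C) fun x => ?_
  rw [← Real.sqrt_sq (norm_nonneg (f x)), ← Real.sqrt_sq (norm_nonneg x), ← Real.sqrt_mul hC]
  exact Real.sqrt_le_sqrt (h x)

end OpNorm

variable {E : Type*} [NormedAddCommGroup E] [InnerProductSpace ℝ E]

lemma inner_map_self_le_opNorm_mul_sq (P : E →L[ℝ] E) (x : E) :
    ⟪P x, x⟫_ℝ ≤ ‖P‖ * ‖x‖ ^ 2 :=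
  calc ⟪P x, x⟫_ℝ ≤ ‖P x‖ * ‖x‖ := real_inner_le_norm _ _
    _ ≤ ‖P‖ * ‖x‖ * ‖x‖ := by gcongr; exact le_opNorm P x
    _ = ‖P‖ * ‖x‖ ^ 2 := by ring

lemma IsPositive.sq_norm_le_of_mul_eq_one {P Q : E →L[ℝ] E} (hP : P.IsPositive)
    (hPQ : P * Q = 1) (x : E) : ‖x‖ ^ 2 ≤ ‖Q‖ * ⟪P x, x⟫_ℝ := by
  have hPQx : P (Q x) = x := by simpa using congr($hPQ x)
  have hCS := LinearMap.BilinForm.apply_mul_apply_le_of_forall_zero_le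
    ((innerₗ E).comp P.toLinearMap) hP.inner_nonneg_left x (Q x)
  simp only [LinearMap.comp_apply, coe_coe, innerₗ_apply_apply, hPQx] at hCS
  have hsymm : ⟪P x, Q x⟫_ℝ = ⟪x, P (Q x)⟫_ℝ := hP.isSymmetric x (Q x)
  rw [hsymm, hPQx, real_inner_self_eq_norm_sq] at hCS
  have hQ : ⟪x, Q x⟫_ℝ ≤ ‖Q‖ * ‖x‖ ^ 2 := by
    rw [real_inner_comm]; exact inner_map_self_le_opNorm_mul_sq Q x
  rcases eq_or_lt_of_le (sq_nonneg ‖x‖) with hx | hx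
  · rw [← hx]; exact mul_nonneg (norm_nonneg Q) (hP.inner_nonneg_left x)
  · nlinarith [hP.inner_nonneg_left x]

section Lyapunov

variable [CompleteSpace E] {T P : E →L[ℝ] E}

lemma inner_map_self_comp_eq_of_lyapunov (hlyap : P = star T * P * T + 1) (x : E) :
    ⟪P (T x), T x⟫_ℝ = ⟪P x, x⟫_ℝ - ‖x‖ ^ 2 := by
  have h := congr(⟪$hlyap x, x⟫_ℝ)
  rw [_root_.add_apply, mul_apply_eq_comp, mul_apply_eq_comp, star_eq_adjoint,
    one_apply_eq_self, inner_add_left, adjoint_inner_left, real_inner_self_eq_norm_sq] at h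
  linarith

lemma sq_norm_le_inner_map_self_of_lyapunov (hP : P.IsPositive)
    (hlyap : P = star T * P * T + 1) (x : E) : ‖x‖ ^ 2 ≤ ⟪P x, x⟫_ℝ := by
  have h := hP.inner_nonneg_left (T x)
  rw [inner_map_self_comp_eq_of_lyapunov hlyap] at h
  linarith

lemma one_le_norm_of_lyapunov [Nontrivial E] (hP : P.IsPositive)
    (hlyap : P = star T * P * T + 1) : 1 ≤ ‖P‖ := by
  obtain ⟨x, hx⟩ := exists_ne (0 : E)
  have h := (sq_norm_le_inner_map_self_of_lyapunov hP hlyap x).trans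
    (inner_map_self_le_opNorm_mul_sq P x)
  exact le_of_mul_le_mul_right (by rwa [one_mul]) (by positivity)

lemma one_sub_one_div_norm_nonneg_of_lyapunov [Nontrivial E] (hP : P.IsPositive)
    (hlyap : P = star T * P * T + 1) : 0 ≤ 1 - 1 / ‖P‖ :=
  sub_nonneg.2 <| div_le_one_of_le₀ (one_le_norm_of_lyapunov hP hlyap) (norm_nonneg P)

lemma inner_map_self_comp_le_of_lyapunov [Nontrivial E] (hP : P.IsPositive)
    (hlyap : P = star T * P * T + 1) (x : E) :
    ⟪P (T x), T x⟫_ℝ ≤ (1 - 1 / ‖P‖) * ⟪P x, x⟫_ℝ := by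
  have hPpos : 0 < ‖P‖ := one_pos.trans_le (one_le_norm_of_lyapunov hP hlyap)
  calc ⟪P (T x), T x⟫_ℝ = ⟪P x, x⟫_ℝ - ‖x‖ ^ 2 := inner_map_self_comp_eq_of_lyapunov hlyap x
    _ ≤ ⟪P x, x⟫_ℝ - ⟪P x, x⟫_ℝ / ‖P‖ := by
      gcongr
      exact div_le_of_le_mul₀ (by positivity) (by positivity) <| by
        rw [mul_comm]; exact inner_map_self_le_opNorm_mul_sq P x
    _ = (1 - 1 / ‖P‖) * ⟪P x, x⟫_ℝ := by ring

lemma inner_map_self_pow_le_of_lyapunov [Nontrivial E] (hP : P.IsPositive)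
    (hlyap : P = star T * P * T + 1) (k : ℕ) (x : E) :
    ⟪P ((T ^ k) x), (T ^ k) x⟫_ℝ ≤ (1 - 1 / ‖P‖) ^ k * ⟪P x, x⟫_ℝ := by
  have hρ := one_sub_one_div_norm_nonneg_of_lyapunov hP hlyap
  induction k with
  | zero => simp
  | succ k ih =>
    calc ⟪P ((T ^ (k + 1)) x), (T ^ (k + 1)) x⟫_ℝ
        = ⟪P (T ((T ^ k) x)), T ((T ^ k) x)⟫_ℝ := by rw [pow_succ', mul_apply_eq_comp]
      _ ≤ (1 - 1 / ‖P‖) * ⟪P ((T ^ k) x), (T ^ k) x⟫_ℝ :=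
        inner_map_self_comp_le_of_lyapunov hP hlyap _
      _ ≤ (1 - 1 / ‖P‖) * ((1 - 1 / ‖P‖) ^ k * ⟪P x, x⟫_ℝ) := by gcongr
      _ = (1 - 1 / ‖P‖) ^ (k + 1) * ⟪P x, x⟫_ℝ := by ring

theorem sq_norm_pow_le_of_lyapunov {Q : E →L[ℝ] E} (hP : P.IsPositive)
    (hlyap : P = star T * P * T + 1) (hPQ : P * Q = 1) (k : ℕ) :
    ‖T ^ k‖ ^ 2 ≤ ‖P‖ * ‖Q‖ * (1 - 1 / ‖P‖) ^ k := by
  nontriviality E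
  have hρ := one_sub_one_div_norm_nonneg_of_lyapunov hP hlyap
  refine sq_opNorm_le_of_sq_norm_apply_le (by positivity) fun x => ?_
  calc ‖(T ^ k) x‖ ^ 2 ≤ ‖Q‖ * ⟪P ((T ^ k) x), (T ^ k) x⟫_ℝ :=
        hP.sq_norm_le_of_mul_eq_one hPQ _
    _ ≤ ‖Q‖ * ((1 - 1 / ‖P‖) ^ k * ⟪P x, x⟫_ℝ) := by
      gcongr; exact inner_map_self_pow_le_of_lyapunov hP hlyap k x
    _ ≤ ‖Q‖ * ((1 - 1 / ‖P‖) ^ k * (‖P‖ * ‖x‖ ^ 2)) := by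
      gcongr; exact inner_map_self_le_opNorm_mul_sq P x
    _ = ‖P‖ * ‖Q‖ * (1 - 1 / ‖P‖) ^ k * ‖x‖ ^ 2 := by ring

end Lyapunov

end ContinuousLinearMap

namespace Matrix

variable {𝕜 n : Type*} [RCLike 𝕜] [Fintype n] [DecidableEq n]

lemma PosSemidef.isPositive_toEuclideanCLM {P : Matrix n n 𝕜} (hP : P.PosSemidef) :
    (toEuclideanCLM (𝕜 := 𝕜) P).IsPositive := by
  rw [← ContinuousLinearMap.isPositive_toLinearMap_iff, coe_toEuclideanCLM_eq_toEuclideanLin,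
    isPositive_toEuclideanLin_iff]
  exact hP

theorem sq_norm_pow_le_of_lyapunov {A P : Matrix n n ℝ} (hP : P.PosSemidef)
    (hlyap : P = Aᵀ * P * A + 1) (k : ℕ) :
    ‖A ^ k‖ ^ 2 ≤ ‖P‖ * ‖P⁻¹‖ * (1 - 1 / ‖P‖) ^ k := by
  have hAstar : Aᵀ = star A := by
    rw [star_eq_conjTranspose, conjTranspose_eq_transpose_of_trivial]
  have hPD : P.PosDef := by
    rw [hlyap, hAstar]
    exact PosDef.posSemidef_add (hP.conjTranspose_mul_mul_same A) PosDef.one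
  let Φ : Matrix n n ℝ ≃⋆ₐ[ℝ] _ := toEuclideanCLM
  have hlyap' : Φ P = star (Φ A) * Φ P * Φ A + 1 := by
    rw [← map_star, ← map_mul, ← map_mul, ← map_one Φ, ← map_add, ← hAstar, ← hlyap]
  have hPQ : Φ P * Φ P⁻¹ = 1 := by
    rw [← map_mul, mul_nonsing_inv _ ((isUnit_iff_isUnit_det _).mp hPD.isUnit), map_one]
  simpa only [cstar_norm_def, map_pow] using
    ContinuousLinearMap.sq_norm_pow_le_of_lyapunov hP.isPositive_toEuclideanCLM hlyap' hPQ k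

end Matrix

/-- Lemma A.1, first part (Lyapunov stability margin): if `P ⪰ 0` solves the
discrete Lyapunov equation `P = AᵀPA + I`, then the powers of `A` decay
geometrically: `‖Aᵏ‖² ≤ cond(P)·(1 − 1/‖P‖)ᵏ` with `cond(P) = ‖P‖·‖P⁻¹‖`. -/
theorem stmt_14 (d : ℕ) (A P : Matrix (Fin d) (Fin d) ℝ)
    (hP : P.PosSemidef) (hlyap : P = Aᵀ * P * A + 1) :
    ∀ k : ℕ, ‖A ^ k‖ ^ 2 ≤ (‖P‖ * ‖P⁻¹‖) * (1 - 1 / ‖P‖) ^ k :=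
  Matrix.sq_norm_pow_le_of_lyapunov hP hlyap
end

section
/- Lemma A.1, second part (robustness of the Lyapunov stability margin to perturbations). Let A be a d×d real matrix and let P be a symmetric positive semidefinite d×d real matrix solving the discrete Lyapunov equation P = AᵀPA + I (so P ⪰ I and P is invertible). Let Δ be any d×d real matrix with ‖Δ‖ ≤ 1/(6‖P‖²). Then for every natural number k, ‖(A + Δ)ᵏ‖² ≤ cond(P)·(1 − 1/(2‖P‖))ᵏ, where cond(P) := ‖P‖·‖P⁻¹‖. -/
open scoped InnerProductSpace Matrix.Norms.L2Operator
open Matrix ContinuousLinearMap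

/-!
The quadratic form `V x = ⟪x, P x⟫` is a Lyapunov function: the equation `P = AᵀPA + I` says
`V (A x) = V x - ‖x‖²`, while `‖x‖² ≤ V x ≤ ‖P‖ ‖x‖²`. A perturbation `Δ` with
`‖P‖²‖Δ‖ ≤ 1/6` adds at most `(1/3 + 1/36) ‖x‖²` to `V (A x)`, so `V` still drops by
`‖x‖² / 2 ≥ V x / (2‖P‖)` along `A + Δ`. Iterating, and converting back to norms with
`‖y‖² ≤ ‖P⁻¹‖ V y`, gives the bound with the condition number `‖P‖ ‖P⁻¹‖`.
-/

section QuadraticForm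

variable {E : Type*} [NormedAddCommGroup E] [InnerProductSpace ℝ E]

theorem real_inner_apply_le (P : E →L[ℝ] E) (x y : E) : ⟪x, P y⟫_ℝ ≤ ‖P‖ * ‖x‖ * ‖y‖ :=
  calc ⟪x, P y⟫_ℝ ≤ ‖x‖ * ‖P y‖ := real_inner_le_norm _ _
    _ ≤ ‖x‖ * (‖P‖ * ‖y‖) := by gcongr; exact P.le_opNorm y
    _ = ‖P‖ * ‖x‖ * ‖y‖ := by ring

theorem real_inner_apply_self_le (P : E →L[ℝ] E) (x : E) : ⟪x, P x⟫_ℝ ≤ ‖P‖ * ‖x‖ ^ 2 := by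
  simpa [mul_assoc, sq] using real_inner_apply_le P x x

theorem real_inner_apply_add_self_le (P : E →L[ℝ] E) (x y : E) :
    ⟪x + y, P (x + y)⟫_ℝ ≤ ⟪x, P x⟫_ℝ + 2 * ‖P‖ * ‖x‖ * ‖y‖ + ‖P‖ * ‖y‖ ^ 2 := by
  have hxy := real_inner_apply_le P x y
  have hyx := real_inner_apply_le P y x
  have hyy := real_inner_apply_self_le P y
  rw [map_add, inner_add_left, inner_add_right, inner_add_right]
  linarith

/-- The quadratic `t ↦ ⟪y - t • Q y, P (y - t • Q y)⟫` is nonnegative, so its discriminant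
`4‖y‖⁴ - 4⟪Q y, y⟫⟪y, P y⟫` is not positive. -/
theorem norm_sq_le_mul_real_inner_apply_self {P Q : E →L[ℝ] E} (hP : P.IsPositive)
    (hPQ : P * Q = 1) (y : E) : ‖y‖ ^ 2 ≤ ‖Q‖ * ⟪y, P y⟫_ℝ := by
  have hPQy : P (Q y) = y := by rw [← mul_apply_eq_comp, hPQ, one_apply_eq_self]
  have hquad : ∀ t : ℝ, 0 ≤ ⟪Q y, y⟫_ℝ * (t * t) + -(2 * ‖y‖ ^ 2) * t + ⟪y, P y⟫_ℝ := by
    intro t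
    have hcross : ⟪Q y, P y⟫_ℝ = ‖y‖ ^ 2 := by
      rw [← hP.inner_left_eq_inner_right, hPQy, real_inner_self_eq_norm_sq]
    have := hP.inner_nonneg_right (y - t • Q y)
    rw [map_sub, map_smul, hPQy, inner_sub_left, inner_sub_right, inner_sub_right,
      real_inner_smul_left, real_inner_smul_left, real_inner_smul_right, real_inner_smul_right,
      hcross, real_inner_self_eq_norm_sq] at this
    linarith
  have hdiscr := discrim_le_zero hquad
  have hQy : ⟪Q y, y⟫_ℝ ≤ ‖Q‖ * ‖y‖ ^ 2 := by
    rw [real_inner_comm]; exact real_inner_apply_self_le Q y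
  have hV := hP.inner_nonneg_right y
  rw [discrim] at hdiscr
  rcases (sq_nonneg ‖y‖).eq_or_lt with hy | hy
  · rw [← hy]; positivity
  · refine le_of_mul_le_mul_left ?_ hy
    nlinarith

theorem real_inner_pow_apply_self_le {M P : E →L[ℝ] E} {ρ : ℝ} (hρ : 0 ≤ ρ)
    (hM : ∀ x, ⟪M x, P (M x)⟫_ℝ ≤ ρ * ⟪x, P x⟫_ℝ) (n : ℕ) (x : E) :
    ⟪(M ^ n) x, P ((M ^ n) x)⟫_ℝ ≤ ρ ^ n * ⟪x, P x⟫_ℝ := by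
  induction n generalizing x with
  | zero => simp
  | succ n ih =>
    calc ⟪(M ^ (n + 1)) x, P ((M ^ (n + 1)) x)⟫_ℝ = ⟪(M ^ n) (M x), P ((M ^ n) (M x))⟫_ℝ := by
          rw [pow_succ, mul_apply_eq_comp]
      _ ≤ ρ ^ n * (ρ * ⟪x, P x⟫_ℝ) := (ih (M x)).trans (by gcongr; exact hM x)
      _ = ρ ^ (n + 1) * ⟪x, P x⟫_ℝ := by ring

end QuadraticForm

theorem ContinuousLinearMap.opNorm_sq_le_of_norm_apply_sq_le {E F : Type*}
    [SeminormedAddCommGroup E] [SeminormedAddCommGroup F] [NormedSpace ℝ E] [NormedSpace ℝ F]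
    {T : E →L[ℝ] F} {C : ℝ} (hC : 0 ≤ C) (hT : ∀ x, ‖T x‖ ^ 2 ≤ C * ‖x‖ ^ 2) :
    ‖T‖ ^ 2 ≤ C := by
  refine (Real.le_sqrt (norm_nonneg _) hC).mp (T.opNorm_le_bound (Real.sqrt_nonneg C) fun x => ?_)
  rw [← Real.sqrt_sq (norm_nonneg (T x)), ← Real.sqrt_sq (norm_nonneg x), ← Real.sqrt_mul hC]
  exact Real.sqrt_le_sqrt (hT x)

section Lyapunov

variable {E : Type*} [NormedAddCommGroup E] [InnerProductSpace ℝ E] [CompleteSpace E]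
  {A P : E →L[ℝ] E}

theorem real_inner_apply_self_eq_of_lyapunov (hL : P = adjoint A * P * A + 1) (x : E) :
    ⟪x, P x⟫_ℝ = ⟪A x, P (A x)⟫_ℝ + ‖x‖ ^ 2 := by
  conv_lhs => rw [hL]
  rw [_root_.add_apply, one_apply_eq_self, inner_add_right, mul_apply_eq_comp,
    mul_apply_eq_comp, adjoint_inner_right,
    real_inner_self_eq_norm_sq]

theorem norm_sq_le_real_inner_apply_self_of_lyapunov (hP : P.IsPositive)
    (hL : P = adjoint A * P * A + 1) (x : E) : ‖x‖ ^ 2 ≤ ⟪x, P x⟫_ℝ := by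
  linarith [real_inner_apply_self_eq_of_lyapunov hL x, hP.inner_nonneg_right (A x)]

theorem one_le_opNorm_of_lyapunov [Nontrivial E] (hP : P.IsPositive)
    (hL : P = adjoint A * P * A + 1) : 1 ≤ ‖P‖ := by
  obtain ⟨x, hx⟩ := exists_ne (0 : E)
  have hx2 : 0 < ‖x‖ ^ 2 := by positivity
  have := (norm_sq_le_real_inner_apply_self_of_lyapunov hP hL x).trans
    (real_inner_apply_self_le P x)
  nlinarith

theorem norm_apply_sq_le_of_lyapunov (hP : P.IsPositive) (hL : P = adjoint A * P * A + 1)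
    (x : E) : ‖A x‖ ^ 2 ≤ ‖P‖ * ‖x‖ ^ 2 :=
  calc ‖A x‖ ^ 2 ≤ ⟪A x, P (A x)⟫_ℝ := norm_sq_le_real_inner_apply_self_of_lyapunov hP hL _
    _ ≤ ⟪x, P x⟫_ℝ := by linarith [real_inner_apply_self_eq_of_lyapunov hL x, sq_nonneg ‖x‖]
    _ ≤ ‖P‖ * ‖x‖ ^ 2 := real_inner_apply_self_le P x

theorem real_inner_apply_self_add_le_of_lyapunov [Nontrivial E] (hP : P.IsPositive)
    (hL : P = adjoint A * P * A + 1) {Δ : E →L[ℝ] E} (hΔ : ‖Δ‖ ≤ 1 / (6 * ‖P‖ ^ 2)) (x : E) :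
    ⟪(A + Δ) x, P ((A + Δ) x)⟫_ℝ ≤ (1 - 1 / (2 * ‖P‖)) * ⟪x, P x⟫_ℝ := by
  have hP1 := one_le_opNorm_of_lyapunov hP hL
  have hPΔ : ‖P‖ ^ 2 * ‖Δ‖ ≤ 1 / 6 := by
    rw [le_div_iff₀ (by positivity)] at hΔ; linarith
  have hPΔ2 : ‖P‖ * ‖Δ‖ ^ 2 ≤ 1 / 36 := by
    calc ‖P‖ * ‖Δ‖ ^ 2 ≤ ‖P‖ ^ 4 * ‖Δ‖ ^ 2 := by gcongr; exact le_self_pow₀ hP1 (by norm_num)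
      _ = (‖P‖ ^ 2 * ‖Δ‖) ^ 2 := by ring
      _ ≤ (1 / 6) ^ 2 := by gcongr
      _ = 1 / 36 := by norm_num
  have hAx : ‖A x‖ ≤ ‖P‖ * ‖x‖ := by
    refine le_of_pow_le_pow_left₀ two_ne_zero (by positivity) ?_
    nlinarith [norm_apply_sq_le_of_lyapunov hP hL x, sq_nonneg ‖x‖]
  have hΔx : ‖Δ x‖ ≤ ‖Δ‖ * ‖x‖ := Δ.le_opNorm x
  have hperturb : ⟪(A + Δ) x, P ((A + Δ) x)⟫_ℝ ≤ ⟪A x, P (A x)⟫_ℝ + ‖x‖ ^ 2 / 2 := by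
    calc ⟪(A + Δ) x, P ((A + Δ) x)⟫_ℝ
        ≤ ⟪A x, P (A x)⟫_ℝ + 2 * ‖P‖ * ‖A x‖ * ‖Δ x‖ + ‖P‖ * ‖Δ x‖ ^ 2 :=
          real_inner_apply_add_self_le P (A x) (Δ x)
      _ ≤ ⟪A x, P (A x)⟫_ℝ + 2 * ‖P‖ * (‖P‖ * ‖x‖) * (‖Δ‖ * ‖x‖) + ‖P‖ * (‖Δ‖ * ‖x‖) ^ 2 := by
          gcongr
      _ = ⟪A x, P (A x)⟫_ℝ + 2 * (‖P‖ ^ 2 * ‖Δ‖) * ‖x‖ ^ 2 + ‖P‖ * ‖Δ‖ ^ 2 * ‖x‖ ^ 2 := by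
          ring
      _ ≤ ⟪A x, P (A x)⟫_ℝ + 2 * (1 / 6) * ‖x‖ ^ 2 + 1 / 36 * ‖x‖ ^ 2 := by gcongr
      _ ≤ ⟪A x, P (A x)⟫_ℝ + ‖x‖ ^ 2 / 2 := by nlinarith [sq_nonneg ‖x‖]
  have hV : ⟪x, P x⟫_ℝ / (2 * ‖P‖) ≤ ‖x‖ ^ 2 / 2 := by
    rw [div_le_iff₀ (by positivity)]
    nlinarith [real_inner_apply_self_le P x]
  have hρ : (1 - 1 / (2 * ‖P‖)) * ⟪x, P x⟫_ℝ = ⟪x, P x⟫_ℝ - ⟪x, P x⟫_ℝ / (2 * ‖P‖) := by ring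
  linarith [real_inner_apply_self_eq_of_lyapunov hL x]

theorem opNorm_pow_add_sq_le_of_lyapunov (hP : P.IsPositive) (hL : P = adjoint A * P * A + 1)
    {Q : E →L[ℝ] E} (hPQ : P * Q = 1) {Δ : E →L[ℝ] E} (hΔ : ‖Δ‖ ≤ 1 / (6 * ‖P‖ ^ 2)) (k : ℕ) :
    ‖(A + Δ) ^ k‖ ^ 2 ≤ ‖P‖ * ‖Q‖ * (1 - 1 / (2 * ‖P‖)) ^ k := by
  rcases subsingleton_or_nontrivial E with hE | hE
  · simp [Subsingleton.elim P 0, Subsingleton.elim ((A + Δ) ^ k) 0]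
  have hP1 := one_le_opNorm_of_lyapunov hP hL
  have hρ : 0 ≤ 1 - 1 / (2 * ‖P‖) := by
    rw [sub_nonneg, div_le_one (by positivity)]; linarith
  refine opNorm_sq_le_of_norm_apply_sq_le (by positivity) fun x => ?_
  calc ‖((A + Δ) ^ k) x‖ ^ 2 ≤ ‖Q‖ * ⟪((A + Δ) ^ k) x, P (((A + Δ) ^ k) x)⟫_ℝ :=
        norm_sq_le_mul_real_inner_apply_self hP hPQ _
    _ ≤ ‖Q‖ * ((1 - 1 / (2 * ‖P‖)) ^ k * (‖P‖ * ‖x‖ ^ 2)) := by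
        gcongr
        exact (real_inner_pow_apply_self_le hρ
          (real_inner_apply_self_add_le_of_lyapunov hP hL hΔ) k x).trans
          (by gcongr; exact real_inner_apply_self_le P x)
    _ = ‖P‖ * ‖Q‖ * (1 - 1 / (2 * ‖P‖)) ^ k * ‖x‖ ^ 2 := by ring

end Lyapunov

open scoped ComplexOrder in
theorem Matrix.posDef_of_lyapunov {n 𝕜 : Type*} [Fintype n] [DecidableEq n] [RCLike 𝕜]
    {A P : Matrix n n 𝕜} (hP : P.PosSemidef) (hL : P = Aᴴ * P * A + 1) : P.PosDef :=
  hL ▸ PosDef.posSemidef_add (hP.conjTranspose_mul_mul_same A) PosDef.one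

/-- Lemma A.1, second part (robustness of the Lyapunov stability margin): if
`P ⪰ 0` solves `P = AᵀPA + I` and `‖Δ‖ ≤ 1/(6‖P‖²)`, then
`‖(A + Δ)ᵏ‖² ≤ cond(P)·(1 − 1/(2‖P‖))ᵏ` with `cond(P) = ‖P‖·‖P⁻¹‖`. -/
theorem stmt_15 (d : ℕ) (A P Δ : Matrix (Fin d) (Fin d) ℝ)
    (hP : P.PosSemidef) (hlyap : P = Aᵀ * P * A + 1)
    (hΔ : ‖Δ‖ ≤ 1 / (6 * ‖P‖ ^ 2)) :
    ∀ k : ℕ, ‖(A + Δ) ^ k‖ ^ 2 ≤ (‖P‖ * ‖P⁻¹‖) * (1 - 1 / (2 * ‖P‖)) ^ k := by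
  intro k
  set T := toEuclideanCLM (n := Fin d) (𝕜 := ℝ)
  rw [← conjTranspose_eq_transpose_of_trivial] at hlyap
  have hTP : (T P).IsPositive := by
    rwa [← isPositive_toLinearMap_iff, coe_toEuclideanCLM_eq_toEuclideanLin,
      isPositive_toEuclideanLin_iff]
  have hTL : T P = adjoint (T A) * T P * T A + 1 := by
    conv_lhs => rw [hlyap]
    rw [map_add, map_mul, map_mul, ← star_eq_conjTranspose, map_star, star_eq_adjoint, map_one]
  have hTPinv : T P * T P⁻¹ = 1 := by
    rw [← map_mul, mul_nonsing_inv _ ((isUnit_iff_isUnit_det P).mp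
      (posDef_of_lyapunov hP hlyap).isUnit), map_one]
  have := opNorm_pow_add_sq_le_of_lyapunov hTP hTL hTPinv (Δ := T Δ) hΔ k
  rwa [← map_add, ← map_pow] at this
end

section
/- Lemma A.7 (growth of powers of a perturbed matrix). Let A be a d×d real matrix such that for some real numbers a > 0 and b > 0, ‖Aʲ‖ ≤ a·bʲ holds for every natural number j. Then for every d×d real matrix Δ and every natural number n, ‖(A + Δ)ⁿ‖ ≤ a·(b + a·‖Δ‖)ⁿ. -/
/-!
Expanding `(A + Δ)ⁿ` by the discrete Duhamel formula
`(A + Δ)ⁿ = Aⁿ + ∑_{j<n} Aʲ Δ (A + Δ)ⁿ⁻¹⁻ʲ` and bounding each `(A + Δ)ᵏ` with `k < n` by strong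
induction, the bound reduces to the scalar identity
`bⁿ + ∑_{j<n} bʲ (a‖Δ‖) (b + a‖Δ‖)ⁿ⁻¹⁻ʲ = (b + a‖Δ‖)ⁿ`, which is the same Duhamel formula in `ℝ`.
-/

open scoped Matrix.Norms.L2Operator
open Finset

theorem add_pow_eq_pow_add_sum_pow_mul_mul_pow {R : Type*} [Ring R] (A Δ : R) (n : ℕ) :
    (A + Δ) ^ n = A ^ n + ∑ j ∈ range n, A ^ j * Δ * (A + Δ) ^ (n - 1 - j) := by
  induction n with
  | zero => simp
  | succ n ih =>
    rw [sum_range_succ', ← add_assoc, pow_succ', add_mul]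
    simp only [pow_zero, one_mul, Nat.add_sub_cancel, Nat.sub_zero]
    congr 1
    rw [ih, mul_add, mul_sum, pow_succ']
    congr 1
    refine sum_congr rfl fun j _ => ?_
    rw [show n - (j + 1) = n - 1 - j by omega, pow_succ', mul_assoc, mul_assoc, mul_assoc]

theorem norm_add_pow_le_of_norm_pow_le {R : Type*} [SeminormedRing R] {A : R} {a b : ℝ}
    (hA : ∀ j, ‖A ^ j‖ ≤ a * b ^ j) (Δ : R) (n : ℕ) :
    ‖(A + Δ) ^ n‖ ≤ a * (b + a * ‖Δ‖) ^ n := by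
  induction n using Nat.strong_induction_on with
  | _ n ih =>
  set c := b + a * ‖Δ‖
  have hterm : ∀ j ∈ range n,
      ‖A ^ j * Δ * (A + Δ) ^ (n - 1 - j)‖ ≤ a * b ^ j * ‖Δ‖ * (a * c ^ (n - 1 - j)) := by
    intro j hj
    have hk : n - 1 - j < n := by have := mem_range.mp hj; omega
    calc ‖A ^ j * Δ * (A + Δ) ^ (n - 1 - j)‖
        ≤ ‖A ^ j‖ * ‖Δ‖ * ‖(A + Δ) ^ (n - 1 - j)‖ := norm_mul₃_le
      _ ≤ a * b ^ j * ‖Δ‖ * (a * c ^ (n - 1 - j)) := by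
        have hab : 0 ≤ a * b ^ j := (norm_nonneg _).trans (hA j)
        gcongr
        exacts [hA j, ih _ hk]
  calc ‖(A + Δ) ^ n‖
      ≤ ‖A ^ n‖ + ∑ j ∈ range n, ‖A ^ j * Δ * (A + Δ) ^ (n - 1 - j)‖ := by
        rw [add_pow_eq_pow_add_sum_pow_mul_mul_pow]
        exact (norm_add_le _ _).trans (by gcongr; exact norm_sum_le _ _)
    _ ≤ a * b ^ n + ∑ j ∈ range n, a * b ^ j * ‖Δ‖ * (a * c ^ (n - 1 - j)) :=
        add_le_add (hA n) (sum_le_sum hterm)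
    _ = a * (b ^ n + ∑ j ∈ range n, b ^ j * (a * ‖Δ‖) * c ^ (n - 1 - j)) := by
        rw [mul_add, mul_sum]
        congr 1
        exact sum_congr rfl fun j _ => by ring
    _ = a * c ^ n := by rw [← add_pow_eq_pow_add_sum_pow_mul_mul_pow]

theorem stmt_17_general (d : ℕ) (A : Matrix (Fin d) (Fin d) ℝ) (a b : ℝ)
    (hdecay : ∀ j : ℕ, ‖A ^ j‖ ≤ a * b ^ j) :
    ∀ (Δ : Matrix (Fin d) (Fin d) ℝ) (n : ℕ),
      ‖(A + Δ) ^ n‖ ≤ a * (b + a * ‖Δ‖) ^ n :=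
  norm_add_pow_le_of_norm_pow_le hdecay

/-- Lemma A.7: if the powers of `A` satisfy `‖Aʲ‖ ≤ a·bʲ` for all `j`, then for
any perturbation `Δ`, the powers of `A + Δ` satisfy
`‖(A + Δ)ⁿ‖ ≤ a·(b + a·‖Δ‖)ⁿ`. -/
theorem stmt_17 (d : ℕ) (A : Matrix (Fin d) (Fin d) ℝ) (a b : ℝ)
    (ha : 0 < a) (hb : 0 < b) (hdecay : ∀ j : ℕ, ‖A ^ j‖ ≤ a * b ^ j) :
    ∀ (Δ : Matrix (Fin d) (Fin d) ℝ) (n : ℕ),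
      ‖(A + Δ) ^ n‖ ≤ a * (b + a * ‖Δ‖) ^ n :=
  stmt_17_general d A a b hdecay
end
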